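/- arXiv:1210.5575 — 2 statements merged into one kernel-verified Lean document; each statement's English description precedes it below -/
import Mathlib

section
/- On the reference tetrahedron K³, for each face f_{j1} = [j2,j3,j4] and each fixed superscript i ∈ {1,2}, the face-based interior functions Φ^{t,f_{j1}^1}_{m,n} = ι (1−λ_{j2})^m (1−λ_{j2}−λ_{j3})^n P_m^{(2n+3,2)}(2λ_{j3}/(1−λ_{j2}) − 1) P_n^{(0,2)}(2λ_{j4}/(1−λ_{j2}−λ_{j3}) − 1) τ^{[j2,j3]}/|τ^{[j2,j3]}| and Φ^{t,f_{j1}^2}_{m,n} defined likewise with τ^{[j2,j4]}/|τ^{[j2,j4]}|, where ι = C_m^n λ_{j2} λ_{j3} λ_{j4}, are orthonormal on K³: for all integers m1, n1, m2, n2 ≥ 0, ⟨Φ^{t,f_{j1}^i}_{m1,n1}, Φ^{t,f_{j1}^i}_{m2,n2}⟩_{K³} = δ_{m1 m2} δ_{n1 n2}. -/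
open MeasureTheory
open scoped BigOperators

noncomputable section

/-- Vertices of the reference tetrahedron:
`v0 = (0,0,0)`, `v1 = (1,0,0)`, `v2 = (0,1,0)`, `v3 = (0,0,1)`. -/
def vtx : Fin 4 → Fin 3 → ℝ := ![![0,0,0], ![1,0,0], ![0,1,0], ![0,0,1]]

/-- Barycentric coordinates `λ0 = 1−ξ−η−ζ`, `λ1 = ξ`, `λ2 = η`, `λ3 = ζ`. -/
def lam : Fin 4 → (Fin 3 → ℝ) → ℝ :=
  ![fun p => 1 - p 0 - p 1 - p 2, fun p => p 0, fun p => p 1, fun p => p 2]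

/-- The (constant) gradients `∇λ_i`. -/
def gradLam : Fin 4 → Fin 3 → ℝ := ![![-1,-1,-1], ![1,0,0], ![0,1,0], ![0,0,1]]

/-- The reference tetrahedron `K³ = {(ξ,η,ζ) : ξ,η,ζ ≥ 0, ξ+η+ζ ≤ 1}`. -/
def K3 : Set (Fin 3 → ℝ) := {p | 0 ≤ p 0 ∧ 0 ≤ p 1 ∧ 0 ≤ p 2 ∧ p 0 + p 1 + p 2 ≤ 1}

/-- Cross product in ℝ³. -/
def cross3 (u v : Fin 3 → ℝ) : Fin 3 → ℝ :=
  ![u 1 * v 2 - u 2 * v 1, u 2 * v 0 - u 0 * v 2, u 0 * v 1 - u 1 * v 0]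

/-- Euclidean norm in ℝ³. -/
def norm3 (u : Fin 3 → ℝ) : ℝ := Real.sqrt (∑ i, u i ^ 2)

/-- Euclidean dot product in ℝ³. -/
def dot3 (u v : Fin 3 → ℝ) : ℝ := ∑ i, u i * v i

/-- The unit vector in the direction of `u`. -/
def unitV (u : Fin 3 → ℝ) : Fin 3 → ℝ := (norm3 u)⁻¹ • u

/-- The outward unit normal of the face `f_j` of `K³` opposite the vertex
`v_j` (that face lies in the plane `λ_j = 0`): `n^{f_j} = −∇λ_j / |∇λ_j|`. -/
def nFace (j : Fin 4) : Fin 3 → ℝ := (norm3 (gradLam j))⁻¹ • (-(gradLam j))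

/-- The classical (un-normalized) Jacobi polynomial `P_n^{(a,b)}` in homogenized
(cleared-denominator) form: `jacobiHom n a b u w = w^n P_n^{(a,b)}(u/w)` for
`w ≠ 0`, via the explicit sum
`P_n^{(a,b)}(x) = ∑_{s} C(n+a, n−s) C(n+b, s) ((x−1)/2)^s ((x+1)/2)^{n−s}`. -/
def jacobiHom (n a b : ℕ) (u w : ℝ) : ℝ :=
  ∑ k ∈ Finset.range (n+1),
    (((n+a).choose (n-k) : ℝ)) * (((n+b).choose k : ℝ)) *
      ((u - w)/2)^k * ((u + w)/2)^(n-k)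

/-- The degree-`n` Legendre polynomial `ℓ_n` (normalized so `ℓ_n(1) = 1`). -/
def legendre (n : ℕ) (x : ℝ) : ℝ := jacobiHom n 0 0 x 1

/-- Normalization constant
`C_m^n = √((2n+3)(m+n+3)(m+2n+4)(m+2n+5)(2m+2n+7)(2m+2n+8)(2m+2n+9)) / √((m+1)(m+2))`. -/
def Cmn (m n : ℕ) : ℝ :=
  Real.sqrt
    (((2*n+3)*(m+n+3)*(m+2*n+4)*(m+2*n+5)*(2*m+2*n+7)*(2*m+2*n+8)*(2*m+2*n+9) : ℕ) : ℝ) /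
  Real.sqrt (((m+1)*(m+2) : ℕ) : ℝ)

/-- Face-based interior function `Φ^{t,f_{j1}^i}_{m,n}` (`i ∈ {1,2}`):
`ι (1−λ_{j2})^m (1−λ_{j2}−λ_{j3})^n P_m^{(2n+3,2)}(2λ_{j3}/(1−λ_{j2}) − 1)
P_n^{(0,2)}(2λ_{j4}/(1−λ_{j2}−λ_{j3}) − 1)` times the unit tangent
`τ^{[j2,j3]}/|τ^{[j2,j3]}|` (for `i = 1`, here `i = 0 : Fin 2`) or
`τ^{[j2,j4]}/|τ^{[j2,j4]}|` (for `i = 2`), where `ι = C_m^n λ_{j2} λ_{j3} λ_{j4}`. -/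
def faceInt (j2 j3 j4 : Fin 4) (i : Fin 2) (m n : ℕ) (p : Fin 3 → ℝ) : Fin 3 → ℝ :=
  (Cmn m n * lam j2 p * lam j3 p * lam j4 p *
    jacobiHom m (2*n+3) 2 (2 * lam j3 p - (1 - lam j2 p)) (1 - lam j2 p) *
    jacobiHom n 0 2 (2 * lam j4 p - (1 - lam j2 p - lam j3 p))
      (1 - lam j2 p - lam j3 p)) •
  (if i = 0 then unitV (vtx j3 - vtx j2) else unitV (vtx j4 - vtx j2))

/-!
The scalar factor of `Φ^{t,f_{j1}^i}_{m,n}` depends on `p` only through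
`(λ_{j2}, λ_{j3}, λ_{j4})`, and `p ↦ (λ_{j2}, λ_{j3}, λ_{j4})` is an affine bijection of `K³`
with Jacobian `±1`; the unit tangent factor drops out of the dot product. So it suffices to
integrate the product of two profiles in the coordinates `(x, y, z)` themselves, in the order
`z, y, x`. The substitutions `z = (1-x-y) t` and `y = (1-x) t` turn the two inner integrals into
the orthogonality relations of the Jacobi polynomials `P^{(0,2)}` and `P^{(2n+3,2)}` on `[0,1]`,
the outer one is a Beta integral, and `C_m^n` is exactly the normalisation that makes the
resulting product of constants equal to `1`.

Jacobi orthogonality itself comes from the explicit expansion: the moments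
`∫ t^(b+i) (1-t)^(a+j) P_m^{(a,b)}(2t-1)` reduce, via Beta integrals, to an alternating binomial
sum that vanishes for `i + j < m`.
-/

open scoped Nat

section Combinatorics

open Finset

lemma sum_range_succ_alternating_choose (m : ℕ) (F : ℕ → ℝ) :
    ∑ s ∈ range (m + 2), (-1 : ℝ) ^ s * (m + 1).choose s * F s =
      ∑ s ∈ range (m + 1), (-1 : ℝ) ^ s * m.choose s * (F s - F (s + 1)) := by
  have hpascal : ∀ s, ((m + 1).choose (s + 1) : ℝ) = m.choose s + m.choose (s + 1) :=
    fun s => by exact_mod_cast Nat.choose_succ_succ m s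
  have hshift := sum_range_succ' (fun s => (-1 : ℝ) ^ s * m.choose s * F s) (m + 1)
  rw [sum_range_succ, Nat.choose_succ_self] at hshift
  have hsplit : ∑ s ∈ range (m + 1), (-1 : ℝ) ^ (s + 1) * (m + 1).choose (s + 1) * F (s + 1) =
      ∑ s ∈ range (m + 1), (-1 : ℝ) ^ (s + 1) * m.choose (s + 1) * F (s + 1) -
        ∑ s ∈ range (m + 1), (-1 : ℝ) ^ s * m.choose s * F (s + 1) := by
    rw [← sum_sub_distrib]
    exact sum_congr rfl fun s _ => by rw [hpascal]; ring
  have hrhs : ∑ s ∈ range (m + 1), (-1 : ℝ) ^ s * m.choose s * (F s - F (s + 1)) =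
      ∑ s ∈ range (m + 1), (-1 : ℝ) ^ s * m.choose s * F s -
        ∑ s ∈ range (m + 1), (-1 : ℝ) ^ s * m.choose s * F (s + 1) := by
    rw [← sum_sub_distrib]
    exact sum_congr rfl fun s _ => by ring
  rw [sum_range_succ', hsplit, hrhs]
  simp only [Nat.choose_zero_right, Nat.cast_zero, Nat.cast_one, pow_zero, mul_zero,
    zero_mul, add_zero] at hshift ⊢
  linarith

lemma choose_mul_choose_sub_succ (a c i j s : ℕ) (hs : s < c) :
    ((a + j + s).choose j * (c - s).choose i : ℝ) -
        (a + j + (s + 1)).choose j * (c - (s + 1)).choose i =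
      (if i = 0 then 0 else ((a + j + s).choose j * (c - 1 - s).choose (i - 1) : ℝ)) -
        (if j = 0 then 0
          else ((a + 1 + (j - 1) + s).choose (j - 1) * (c - 1 - s).choose i : ℝ)) := by
  rw [show c - s = c - 1 - s + 1 by omega, show c - (s + 1) = c - 1 - s by omega]
  rcases i with _ | i <;> rcases j with _ | j
  · simp
  · have := Nat.choose_succ_succ' (a + j + 1 + s) j
    simp only [show a + (j + 1) + (s + 1) = a + j + 1 + s + 1 by ring,
      show a + 1 + (j + 1 - 1) + s = a + j + 1 + s by omega,
      show a + (j + 1) + s = a + j + 1 + s by ring,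
      this, Nat.choose_zero_right]
    push_cast; ring
  · have := Nat.choose_succ_succ' (c - 1 - s) i
    simp only [this, Nat.choose_zero_right]
    push_cast; ring
  · have h₁ := Nat.choose_succ_succ' (a + j + 1 + s) j
    have h₂ := Nat.choose_succ_succ' (c - 1 - s) i
    simp only [show a + (j + 1) + (s + 1) = a + j + 1 + s + 1 by ring,
      show a + 1 + (j + 1 - 1) + s = a + j + 1 + s by omega,
      show a + (j + 1) + s = a + j + 1 + s by ring,
      h₁, h₂]
    push_cast; ring

/-- On `s ≤ m ≤ c` the summand `(a+j+s).choose j * (c-s).choose i` is a polynomial of degree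
`i + j` in `s`, and the sum is (up to sign) its `m`-th finite difference. -/
lemma alternating_sum_choose_mul_choose (m i j a c : ℕ) (hij : i + j ≤ m) (hmc : m ≤ c) :
    ∑ s ∈ range (m + 1), (-1 : ℝ) ^ s * m.choose s * ((a + j + s).choose j * (c - s).choose i) =
      if i + j = m then (-1 : ℝ) ^ j * m.choose i else 0 := by
  induction m generalizing i j a c with
  | zero =>
    obtain ⟨rfl, rfl⟩ : i = 0 ∧ j = 0 := by omega
    simp
  | succ m ih =>
    rw [sum_range_succ_alternating_choose,
      sum_congr rfl fun s hs => by
        rw [choose_mul_choose_sub_succ a c i j s (by simp at hs; omega), mul_sub],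
      sum_sub_distrib]
    rcases i with _ | i <;> rcases j with _ | j
    · simp
    · simp only [Nat.add_one_ne_zero, if_true, if_false, Nat.add_sub_cancel, mul_zero,
        sum_const_zero, zero_sub]
      rw [ih 0 j (a + 1) (c - 1) (by omega) (by omega)]
      by_cases h : j = m <;> simp [h, pow_succ]
    · simp only [Nat.add_one_ne_zero, if_true, if_false, Nat.add_sub_cancel, mul_zero,
        sum_const_zero, sub_zero]
      rw [ih i 0 a (c - 1) (by omega) (by omega)]
      by_cases h : i = m <;> simp [h]
    · simp only [Nat.add_one_ne_zero, if_false, Nat.add_sub_cancel]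
      rw [ih i (j + 1) a (c - 1) (by omega) (by omega),
        ih (i + 1) j (a + 1) (c - 1) (by omega) (by omega)]
      by_cases h : i + j + 1 = m
      · simp only [show i + (j + 1) = m by omega, show i + 1 + j = m by omega,
          show i + 1 + (j + 1) = m + 1 by omega, if_true, Nat.choose_succ_succ' m i]
        push_cast; ring
      · simp only [show i + (j + 1) ≠ m by omega, show i + 1 + j ≠ m by omega,
          show i + 1 + (j + 1) ≠ m + 1 by omega, if_false, sub_zero]

end Combinatorics

section Jacobi

open Finset

lemma integral_pow_mul_one_sub_pow (i j : ℕ) :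
    ∫ t in (0 : ℝ)..1, t ^ i * (1 - t) ^ j = (i ! * j ! / (i + j + 1)! : ℝ) := by
  induction j generalizing i with
  | zero =>
    simp only [pow_zero, mul_one, integral_pow, add_zero, Nat.factorial_succ]
    push_cast
    field_simp
    simp
  | succ j ih =>
    have hsplit : ∀ t : ℝ,
        t ^ i * (1 - t) ^ (j + 1) = t ^ i * (1 - t) ^ j - t ^ (i + 1) * (1 - t) ^ j :=
      fun t => by ring
    simp_rw [hsplit]
    rw [intervalIntegral.integral_sub (by apply Continuous.intervalIntegrable; fun_prop)
      (by apply Continuous.intervalIntegrable; fun_prop), ih, ih,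
      show i + 1 + j + 1 = i + (j + 1) + 1 by ring, Nat.factorial_succ (i + (j + 1)),
      show i + (j + 1) = i + j + 1 by ring, Nat.factorial_succ i, Nat.factorial_succ j]
    push_cast
    field_simp
    ring

def shiftedJacobi (m a b : ℕ) (t : ℝ) : ℝ := jacobiHom m a b (2 * t - 1) 1

lemma shiftedJacobi_eq_sum (m a b : ℕ) (t : ℝ) :
    shiftedJacobi m a b t = ∑ k ∈ range (m + 1),
      ((m + a).choose (m - k) : ℝ) * (m + b).choose k *
        ((-1) ^ k * (t ^ (m - k) * (1 - t) ^ k)) := by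
  rw [shiftedJacobi, jacobiHom]
  refine sum_congr rfl fun k _ => ?_
  rw [show (2 * t - 1 - 1) / 2 = -(1 - t) by ring, show (2 * t - 1 + 1) / 2 = t by ring, neg_pow]
  ring

lemma continuous_shiftedJacobi (m a b : ℕ) : Continuous (shiftedJacobi m a b) := by
  simp only [funext (shiftedJacobi_eq_sum m a b)]
  fun_prop

lemma jacobiHom_mul_mul (n a b : ℕ) (s u w : ℝ) :
    jacobiHom n a b (s * u) (s * w) = s ^ n * jacobiHom n a b u w := by
  rw [jacobiHom, jacobiHom, mul_sum]
  refine sum_congr rfl fun k hk => ?_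
  have hpow : s ^ k * s ^ (n - k) = s ^ n := by rw [← pow_add]; congr 1; simp at hk; omega
  rw [show (s * u - s * w) / 2 = s * ((u - w) / 2) by ring,
    show (s * u + s * w) / 2 = s * ((u + w) / 2) by ring, mul_pow, mul_pow, ← hpow]
  ring

lemma choose_mul_choose_mul_factorial_mul_factorial (m s i j a b : ℕ) (hs : s ≤ m) :
    ((m + a).choose (m - s) : ℝ) * (m + b).choose s * (a + j + s)! * (m + b + i - s)! * m ! =
      (m + a)! * (m + b)! * i ! * j ! *
        ((a + j + s).choose j * (m + b + i - s).choose i * m.choose s) := by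
  rw [Nat.cast_choose ℝ (by omega : m - s ≤ m + a), Nat.cast_choose ℝ (by omega : s ≤ m + b),
    Nat.cast_choose ℝ (by omega : j ≤ a + j + s), Nat.cast_choose ℝ (by omega : i ≤ m + b + i - s),
    Nat.cast_choose ℝ hs, show m + a - (m - s) = a + s by omega,
    show a + j + s - j = a + s by omega, show m + b + i - s - i = m + b - s by omega]
  field_simp

lemma integral_moment_mul_shiftedJacobi (m a b i j : ℕ) (hij : i + j ≤ m) :
    ∫ t in (0 : ℝ)..1, t ^ (b + i) * (1 - t) ^ (a + j) * shiftedJacobi m a b t =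
      if i + j = m then (-1 : ℝ) ^ j * (m + a)! * (m + b)! / (a + b + 2 * m + 1)! else 0 := by
  set K : ℝ := (m + a)! * (m + b)! * i ! * j ! / (m ! * (a + b + i + j + m + 1)!)
  have hterm : ∀ k ∈ range (m + 1),
      ∫ t in (0 : ℝ)..1, t ^ (b + i) * (1 - t) ^ (a + j) *
        (((m + a).choose (m - k) : ℝ) * (m + b).choose k *
          ((-1) ^ k * (t ^ (m - k) * (1 - t) ^ k))) =
      K * ((-1) ^ k * m.choose k * ((a + j + k).choose j * (m + b + i - k).choose i)) := by
    intro k hk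
    have hkm : k ≤ m := by simp at hk; omega
    have hmon : ∀ t : ℝ, t ^ (b + i) * (1 - t) ^ (a + j) *
        (((m + a).choose (m - k) : ℝ) * (m + b).choose k *
          ((-1) ^ k * (t ^ (m - k) * (1 - t) ^ k))) =
        ((m + a).choose (m - k) * (m + b).choose k * (-1) ^ k) *
          (t ^ (m + b + i - k) * (1 - t) ^ (a + j + k)) := fun t => by
      rw [show m + b + i - k = (b + i) + (m - k) by omega]; ring
    simp_rw [hmon]
    rw [intervalIntegral.integral_const_mul, integral_pow_mul_one_sub_pow,
      show m + b + i - k + (a + j + k) + 1 = a + b + i + j + m + 1 by omega]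
    have hfact := choose_mul_choose_mul_factorial_mul_factorial m k i j a b hkm
    simp only [K]
    field_simp
    linear_combination hfact
  simp_rw [shiftedJacobi_eq_sum, mul_sum]
  rw [intervalIntegral.integral_finsetSum fun k _ => by
      apply Continuous.intervalIntegrable; fun_prop,
    sum_congr rfl hterm, ← mul_sum,
    alternating_sum_choose_mul_choose m i j a (m + b + i) hij (by omega)]
  split_ifs with h
  · have hchoose : (m.choose i : ℝ) * i ! * j ! = m ! := by
      have := Nat.choose_mul_factorial_mul_factorial (Nat.le_add_right i j)
      rw [Nat.add_sub_cancel_left, h] at this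
      exact_mod_cast this
    simp only [K, show a + b + i + j + m + 1 = a + b + 2 * m + 1 by omega]
    field_simp
    linear_combination hchoose
  · simp

lemma sum_choose_sub_mul_choose (m a b : ℕ) :
    ∑ k ∈ range (m + 1), (m + a).choose (m - k) * (m + b).choose k = (2 * m + a + b).choose m := by
  rw [show 2 * m + a + b = (m + a) + (m + b) by ring, Nat.add_choose_eq,
    ← Nat.sum_antidiagonal_swap]
  exact (Nat.sum_antidiagonal_eq_sum_range_succ
    (fun i j => (m + a).choose j * (m + b).choose i) m).symm

def jacobiNormSq (m a b : ℕ) : ℝ :=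
  (m + a)! * (m + b)! / (m ! * (m + a + b)! * (a + b + 2 * m + 1))

lemma integral_shiftedJacobi_mul_of_le {m₁ m₂ : ℕ} (a b : ℕ) (h : m₁ ≤ m₂) :
    ∫ t in (0 : ℝ)..1, t ^ b * (1 - t) ^ a * shiftedJacobi m₁ a b t * shiftedJacobi m₂ a b t =
      if m₁ = m₂ then jacobiNormSq m₁ a b else 0 := by
  have hexpand : ∀ t : ℝ, t ^ b * (1 - t) ^ a * shiftedJacobi m₁ a b t * shiftedJacobi m₂ a b t =
      ∑ k ∈ range (m₁ + 1), ((m₁ + a).choose (m₁ - k) * (m₁ + b).choose k * (-1) ^ k : ℝ) *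
        (t ^ (b + (m₁ - k)) * (1 - t) ^ (a + k) * shiftedJacobi m₂ a b t) := fun t => by
    rw [shiftedJacobi_eq_sum m₁, mul_sum, sum_mul]
    exact sum_congr rfl fun k _ => by ring
  have hterm : ∀ k ∈ range (m₁ + 1),
      ∫ t in (0 : ℝ)..1, ((m₁ + a).choose (m₁ - k) * (m₁ + b).choose k * (-1) ^ k : ℝ) *
        (t ^ (b + (m₁ - k)) * (1 - t) ^ (a + k) * shiftedJacobi m₂ a b t) =
      if m₁ = m₂ then (m₁ + a).choose (m₁ - k) * (m₁ + b).choose k *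
        ((m₁ + a)! * (m₁ + b)! / (a + b + 2 * m₁ + 1)! : ℝ) else 0 := by
    intro k hk
    have hk : k ≤ m₁ := by simp at hk; omega
    rw [intervalIntegral.integral_const_mul,
      integral_moment_mul_shiftedJacobi m₂ a b (m₁ - k) k (by omega), Nat.sub_add_cancel hk]
    split_ifs with hm
    · subst hm
      have hsq : ((-1 : ℝ) ^ k) * (-1) ^ k = 1 := by rw [← mul_pow]; simp
      linear_combination ((m₁ + a).choose (m₁ - k) * (m₁ + b).choose k *
        ((m₁ + a)! * (m₁ + b)! / (a + b + 2 * m₁ + 1)! : ℝ)) * hsq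
    · simp
  simp_rw [hexpand]
  rw [intervalIntegral.integral_finsetSum fun k _ => by
      apply Continuous.intervalIntegrable
      have := continuous_shiftedJacobi m₂ a b
      fun_prop,
    sum_congr rfl hterm]
  split_ifs with h₁
  · subst h₁
    have hvdm : ∑ k ∈ range (m₁ + 1), ((m₁ + a).choose (m₁ - k) * (m₁ + b).choose k : ℝ) =
        (2 * m₁ + a + b)! / (m₁ ! * (m₁ + a + b)!) := by
      rw [show m₁ + a + b = 2 * m₁ + a + b - m₁ by omega,
        ← Nat.cast_choose ℝ (by omega : m₁ ≤ 2 * m₁ + a + b)]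
      exact_mod_cast sum_choose_sub_mul_choose m₁ a b
    rw [← sum_mul, hvdm, jacobiNormSq, Nat.factorial_succ,
      show a + b + 2 * m₁ = 2 * m₁ + a + b by ring]
    push_cast
    field_simp
    ring
  · simp

lemma integral_shiftedJacobi_mul (m₁ m₂ a b : ℕ) :
    ∫ t in (0 : ℝ)..1, t ^ b * (1 - t) ^ a * shiftedJacobi m₁ a b t * shiftedJacobi m₂ a b t =
      if m₁ = m₂ then jacobiNormSq m₁ a b else 0 := by
  rcases le_total m₁ m₂ with h | h
  · exact integral_shiftedJacobi_mul_of_le a b h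
  · simp_rw [mul_right_comm _ (shiftedJacobi m₁ a b _)]
    rw [integral_shiftedJacobi_mul_of_le a b h]
    by_cases hm : m₁ = m₂
    · subst hm; rfl
    · simp [hm, Ne.symm hm]

lemma jacobiHom_two_mul_mul_sub (n a b : ℕ) (r t : ℝ) :
    jacobiHom n a b (2 * (r * t) - r) r = r ^ n * shiftedJacobi n a b t := by
  rw [shiftedJacobi, ← jacobiHom_mul_mul, mul_one, mul_sub, mul_one, mul_left_comm]

lemma integral_jacobiHom_mul (m₁ m₂ a b : ℕ) (r : ℝ) :
    ∫ y in (0 : ℝ)..r, y ^ b * (r - y) ^ a *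
        jacobiHom m₁ a b (2 * y - r) r * jacobiHom m₂ a b (2 * y - r) r =
      if m₁ = m₂ then r ^ (a + b + 2 * m₁ + 1) * jacobiNormSq m₁ a b else 0 := by
  have hscale : ∀ t : ℝ, (r * t) ^ b * (r - r * t) ^ a *
      jacobiHom m₁ a b (2 * (r * t) - r) r * jacobiHom m₂ a b (2 * (r * t) - r) r =
      r ^ (a + b + m₁ + m₂) *
        (t ^ b * (1 - t) ^ a * shiftedJacobi m₁ a b t * shiftedJacobi m₂ a b t) := fun t => by
    rw [jacobiHom_two_mul_mul_sub, jacobiHom_two_mul_mul_sub, ← mul_one_sub, mul_pow, mul_pow]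
    ring
  have hsub := intervalIntegral.smul_integral_comp_mul_left (a := 0) (b := 1)
    (fun y => y ^ b * (r - y) ^ a *
      jacobiHom m₁ a b (2 * y - r) r * jacobiHom m₂ a b (2 * y - r) r) r
  simp only [mul_zero, mul_one, smul_eq_mul, hscale] at hsub
  rw [← hsub, intervalIntegral.integral_const_mul, integral_shiftedJacobi_mul]
  split_ifs with h
  · subst h; ring
  · simp

end Jacobi

section Simplex

open Set

lemma integral_fin_three_eq_iterated {f : (Fin 3 → ℝ) → ℝ} (hf : Integrable f) :
    ∫ p, f p = ∫ x, ∫ y, ∫ z, f ![x, y, z] := by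
  let e : (Fin 3 → ℝ) ≃ᵐ ℝ × ℝ × ℝ :=
    (MeasurableEquiv.piFinSuccAbove (fun _ => ℝ) 0).trans
      ((MeasurableEquiv.refl ℝ).prodCongr MeasurableEquiv.finTwoArrow)
  have he : MeasurePreserving e volume volume :=
    ((MeasurePreserving.id volume).prod (volume_preserving_finTwoArrow ℝ)).comp
      (volume_preserving_piFinSuccAbove (fun _ => ℝ) 0)
  have he_symm : ∀ q : ℝ × ℝ × ℝ, e.symm q = ![q.1, q.2.1, q.2.2] := by
    intro q; ext k; fin_cases k <;> rfl
  have hf' : Integrable (fun q : ℝ × ℝ × ℝ => f ![q.1, q.2.1, q.2.2]) (volume.prod volume) := by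
    rw [← Measure.volume_eq_prod]
    simpa only [Function.comp_def, he_symm] using
      (he.symm.integrable_comp_emb e.symm.measurableEmbedding).mpr hf
  rw [← he.symm.integral_comp' f, funext he_symm, Measure.volume_eq_prod, integral_prod _ hf']
  refine integral_congr_ae ?_
  filter_upwards [hf'.prod_right_ae] with x hx
  rw [Measure.volume_eq_prod] at hx
  exact integral_prod _ hx

lemma isClosed_K3 : IsClosed K3 := by
  simp only [K3, ofPred_and]
  refine (isClosed_le continuous_const (continuous_apply 0)).inter
    ((isClosed_le continuous_const (continuous_apply 1)).inter
      ((isClosed_le continuous_const (continuous_apply 2)).inter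
        (isClosed_le (by fun_prop) continuous_const)))

lemma isCompact_K3 : IsCompact K3 := by
  refine (isCompact_Icc (a := 0) (b := 1)).of_isClosed_subset isClosed_K3 ?_
  rintro p ⟨h₀, h₁, h₂, h₃⟩
  refine ⟨fun k => ?_, fun k => ?_⟩ <;> fin_cases k <;> simp <;> linarith

lemma vec_mem_K3_iff (x y z : ℝ) :
    ![x, y, z] ∈ K3 ↔ x ∈ Icc 0 1 ∧ y ∈ Icc 0 (1 - x) ∧ z ∈ Icc 0 (1 - x - y) := by
  simp only [K3, mem_ofPred_eq, mem_Icc, Matrix.cons_val_zero, Matrix.cons_val_one,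
    Matrix.cons_val_two, Matrix.head_cons, Matrix.tail_cons]
  constructor
  · rintro ⟨hx, hy, hz, hs⟩; refine ⟨⟨hx, ?_⟩, ⟨hy, ?_⟩, hz, ?_⟩ <;> linarith
  · rintro ⟨⟨hx, -⟩, ⟨hy, -⟩, hz, hs⟩; exact ⟨hx, hy, hz, by linarith⟩

lemma setIntegral_K3_eq_iterated {g : (Fin 3 → ℝ) → ℝ} (hg : Continuous g) :
    ∫ p in K3, g p =
      ∫ x in Icc 0 1, ∫ y in Icc 0 (1 - x), ∫ z in Icc 0 (1 - x - y), g ![x, y, z] := by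
  have hint : Integrable (K3.indicator g) :=
    (hg.continuousOn.integrableOn_compact isCompact_K3).integrable_indicator
      isClosed_K3.measurableSet
  classical
  rw [← integral_indicator isClosed_K3.measurableSet, integral_fin_three_eq_iterated hint]
  simp only [← integral_indicator measurableSet_Icc, indicator_apply, vec_mem_K3_iff]
  congr 1; ext x
  by_cases hx : x ∈ Icc (0:ℝ) 1
  · simp only [hx, true_and, if_true]
    congr 1; ext y
    by_cases hy : y ∈ Icc 0 (1 - x) <;> simp [hy]
  · simp [hx]

variable {j₂ j₃ j₄ : Fin 4}

lemma lam_eq_add_dotProduct (j : Fin 4) (p : Fin 3 → ℝ) :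
    lam j p = lam j 0 + gradLam j ⬝ᵥ p := by
  fin_cases j <;> simp [lam, gradLam, dotProduct, Fin.sum_univ_three]; ring

lemma abs_det_gradLam (h₂₃ : j₂ ≠ j₃) (h₂₄ : j₂ ≠ j₄) (h₃₄ : j₃ ≠ j₄) :
    |(Matrix.of ![gradLam j₂, gradLam j₃, gradLam j₄]).det| = 1 := by
  fin_cases j₂ <;> fin_cases j₃ <;> fin_cases j₄ <;>
    simp_all [Matrix.det_fin_three, gradLam]

lemma lam_mem_K3_iff (h₂₃ : j₂ ≠ j₃) (h₂₄ : j₂ ≠ j₄) (h₃₄ : j₃ ≠ j₄) (p : Fin 3 → ℝ) :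
    ![lam j₂ p, lam j₃ p, lam j₄ p] ∈ K3 ↔ p ∈ K3 := by
  simp only [K3, mem_ofPred_eq]
  fin_cases j₂ <;> fin_cases j₃ <;> fin_cases j₄ <;> (try simp at h₂₃ h₂₄ h₃₄) <;>
    simp only [lam, Matrix.cons_val, Fin.reduceFinMk] <;>
    constructor <;> rintro ⟨h₁, h₂, h₃, h₄⟩ <;>
    exact ⟨by linarith, by linarith, by linarith, by linarith⟩

lemma setIntegral_K3_comp_lam (h₂₃ : j₂ ≠ j₃) (h₂₄ : j₂ ≠ j₄) (h₃₄ : j₃ ≠ j₄)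
    (F : (Fin 3 → ℝ) → ℝ) :
    ∫ p in K3, F ![lam j₂ p, lam j₃ p, lam j₄ p] = ∫ p in K3, F p := by
  set M : Matrix (Fin 3) (Fin 3) ℝ := Matrix.of ![gradLam j₂, gradLam j₃, gradLam j₄]
  set c : Fin 3 → ℝ := ![lam j₂ 0, lam j₃ 0, lam j₄ 0]
  have hT : ∀ p, ![lam j₂ p, lam j₃ p, lam j₄ p] = c + M.mulVec p := by
    intro p; ext k
    fin_cases k <;> simp [c, M, lam_eq_add_dotProduct _ p]
  have hdet := abs_det_gradLam h₂₃ h₂₄ h₃₄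
  have hdet₀ : M.det ≠ 0 := fun h => by simp [M, h] at hdet
  have hM : MeasurePreserving (fun p => M.mulVec p) volume volume := by
    refine ⟨(Matrix.toLin' M).continuous_of_finiteDimensional.measurable, ?_⟩
    have h := Real.map_matrix_volume_pi_eq_smul_volume_pi hdet₀
    rw [Matrix.toLin'_apply', abs_inv, hdet] at h
    simpa [Matrix.coe_mulVecLin] using h
  have hmp : MeasurePreserving (fun p => c + M.mulVec p) volume volume :=
    (measurePreserving_add_left volume c).comp hM
  have hemb : MeasurableEmbedding fun p => c + M.mulVec p :=
    (continuous_const.add (Matrix.toLin' M).continuous_of_finiteDimensional).measurableEmbedding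
      ((add_right_injective c).comp (Matrix.mulVec_injective_of_det_ne_zero hdet₀))
  have hpre : (fun p => c + M.mulVec p) ⁻¹' K3 = K3 := by
    ext p
    rw [mem_preimage, ← hT p]
    exact lam_mem_K3_iff h₂₃ h₂₄ h₃₄ p
  simp_rw [hT]
  rw [← hmp.setIntegral_preimage_emb hemb F K3, hpre]

end Simplex

section FaceFunctions

open Set

def faceProfile (m n : ℕ) (x y z : ℝ) : ℝ :=
  Cmn m n * x * y * z * jacobiHom m (2 * n + 3) 2 (2 * y - (1 - x)) (1 - x) *
    jacobiHom n 0 2 (2 * z - (1 - x - y)) (1 - x - y)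

lemma continuous_jacobiHom {X : Type*} [TopologicalSpace X] {u w : X → ℝ} (n a b : ℕ)
    (hu : Continuous u) (hw : Continuous w) : Continuous fun p => jacobiHom n a b (u p) (w p) :=
  continuous_finsetSum _ fun _ _ => by fun_prop

lemma continuous_faceProfile (m n : ℕ) :
    Continuous fun p : Fin 3 → ℝ => faceProfile m n (p 0) (p 1) (p 2) := by
  have h₁ := continuous_jacobiHom m (2 * n + 3) 2 (u := fun p : Fin 3 → ℝ => 2 * p 1 - (1 - p 0))
    (w := fun p => 1 - p 0) (by fun_prop) (by fun_prop)
  have h₂ := continuous_jacobiHom n 0 2 (u := fun p : Fin 3 → ℝ => 2 * p 2 - (1 - p 0 - p 1))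
    (w := fun p => 1 - p 0 - p 1) (by fun_prop) (by fun_prop)
  unfold faceProfile
  fun_prop

lemma Cmn_sq_mul_jacobiNormSq (m n : ℕ) :
    Cmn m n ^ 2 * jacobiNormSq n 0 2 * jacobiNormSq m (2 * n + 3) 2 *
      (2 ! * (2 * m + 2 * n + 6)! / (2 * m + 2 * n + 9)! : ℝ) = 1 := by
  have hC : Cmn m n ^ 2 =
      (2 * n + 3) * (m + n + 3) * (m + 2 * n + 4) * (m + 2 * n + 5) * (2 * m + 2 * n + 7) *
        (2 * m + 2 * n + 8) * (2 * m + 2 * n + 9) / ((m + 1) * (m + 2)) := by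
    rw [Cmn, div_pow, Real.sq_sqrt (by positivity), Real.sq_sqrt (by positivity)]
    push_cast; ring
  rw [hC, jacobiNormSq, jacobiNormSq, add_zero,
    show m + (2 * n + 3) + 2 = m + (2 * n + 3) + 1 + 1 by ring,
    Nat.factorial_succ (m + (2 * n + 3) + 1), Nat.factorial_succ (m + (2 * n + 3)),
    show 2 * m + 2 * n + 9 = (2 * m + 2 * n + 6) + 1 + 1 + 1 by ring,
    Nat.factorial_succ (2 * m + 2 * n + 6 + 1 + 1), Nat.factorial_succ (2 * m + 2 * n + 6 + 1),
    Nat.factorial_succ (2 * m + 2 * n + 6),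
    Nat.factorial_succ (m + 1), Nat.factorial_succ m]
  push_cast
  field_simp
  ring

lemma integral_faceProfile_mul_dz (m₁ n₁ m₂ n₂ : ℕ) {x y : ℝ} (h : 0 ≤ 1 - x - y) :
    ∫ z in Icc 0 (1 - x - y), faceProfile m₁ n₁ x y z * faceProfile m₂ n₂ x y z =
      if n₁ = n₂ then Cmn m₁ n₁ * Cmn m₂ n₂ * x ^ 2 * jacobiNormSq n₁ 0 2 *
        (y ^ 2 * (1 - x - y) ^ (2 * n₁ + 3) *
          jacobiHom m₁ (2 * n₁ + 3) 2 (2 * y - (1 - x)) (1 - x) *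
          jacobiHom m₂ (2 * n₂ + 3) 2 (2 * y - (1 - x)) (1 - x))
      else 0 := by
  have hsplit : ∀ z, faceProfile m₁ n₁ x y z * faceProfile m₂ n₂ x y z =
      (Cmn m₁ n₁ * Cmn m₂ n₂ * x ^ 2 * y ^ 2 *
        jacobiHom m₁ (2 * n₁ + 3) 2 (2 * y - (1 - x)) (1 - x) *
        jacobiHom m₂ (2 * n₂ + 3) 2 (2 * y - (1 - x)) (1 - x)) *
      (z ^ 2 * (1 - x - y - z) ^ 0 * jacobiHom n₁ 0 2 (2 * z - (1 - x - y)) (1 - x - y) *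
        jacobiHom n₂ 0 2 (2 * z - (1 - x - y)) (1 - x - y)) := fun z => by
    unfold faceProfile; ring
  rw [integral_Icc_eq_integral_Ioc, ← intervalIntegral.integral_of_le h]
  simp_rw [hsplit]
  rw [intervalIntegral.integral_const_mul, integral_jacobiHom_mul]
  split_ifs with hn
  · subst hn; ring
  · simp

lemma integral_faceProfile_mul_dy_dz (m₁ n₁ m₂ n₂ : ℕ) {x : ℝ} (h : 0 ≤ 1 - x) :
    ∫ y in Icc 0 (1 - x), ∫ z in Icc 0 (1 - x - y),
        faceProfile m₁ n₁ x y z * faceProfile m₂ n₂ x y z =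
      if m₁ = m₂ ∧ n₁ = n₂ then
        Cmn m₁ n₁ ^ 2 * jacobiNormSq n₁ 0 2 * jacobiNormSq m₁ (2 * n₁ + 3) 2 *
          (x ^ 2 * (1 - x) ^ (2 * m₁ + 2 * n₁ + 6))
      else 0 := by
  rw [setIntegral_congr_fun measurableSet_Icc fun y hy =>
    integral_faceProfile_mul_dz m₁ n₁ m₂ n₂ (by linarith [hy.2])]
  by_cases hn : n₁ = n₂
  · subst hn
    simp only [if_true, and_true]
    rw [integral_Icc_eq_integral_Ioc, ← intervalIntegral.integral_of_le h,
      intervalIntegral.integral_const_mul, integral_jacobiHom_mul]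
    split_ifs with hm
    · subst hm; ring
    · simp
  · simp [hn]

lemma setIntegral_K3_faceProfile_mul (m₁ n₁ m₂ n₂ : ℕ) :
    ∫ p in K3, faceProfile m₁ n₁ (p 0) (p 1) (p 2) * faceProfile m₂ n₂ (p 0) (p 1) (p 2) =
      (if m₁ = m₂ then 1 else 0) * (if n₁ = n₂ then 1 else 0) := by
  have hcont : Continuous fun p : Fin 3 → ℝ =>
      faceProfile m₁ n₁ (p 0) (p 1) (p 2) * faceProfile m₂ n₂ (p 0) (p 1) (p 2) :=
    (continuous_faceProfile m₁ n₁).mul (continuous_faceProfile m₂ n₂)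
  rw [setIntegral_K3_eq_iterated hcont]
  simp only [Matrix.cons_val_zero, Matrix.cons_val_one, Matrix.cons_val_two, Matrix.head_cons,
    Matrix.tail_cons]
  rw [setIntegral_congr_fun measurableSet_Icc fun x hx =>
    integral_faceProfile_mul_dy_dz m₁ n₁ m₂ n₂ (by linarith [hx.2])]
  by_cases h : m₁ = m₂ ∧ n₁ = n₂
  · obtain ⟨rfl, rfl⟩ := h
    simp only [and_self, if_true, mul_one]
    rw [integral_Icc_eq_integral_Ioc, ← intervalIntegral.integral_of_le zero_le_one,
      intervalIntegral.integral_const_mul, integral_pow_mul_one_sub_pow,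
      show 2 + (2 * m₁ + 2 * n₁ + 6) + 1 = 2 * m₁ + 2 * n₁ + 9 by ring]
    exact Cmn_sq_mul_jacobiNormSq m₁ n₁
  · simp only [if_neg h, integral_zero]
    by_cases hm : m₁ = m₂ <;> simp_all

end FaceFunctions

lemma dot3_smul_unitV (a b : ℝ) {w : Fin 3 → ℝ} (hw : w ≠ 0) :
    dot3 (a • unitV w) (b • unitV w) = a * b := by
  have hpos : 0 < ∑ i, w i ^ 2 := by
    obtain ⟨i, hi⟩ := Function.ne_iff.mp hw
    have hi : w i ≠ 0 := hi
    exact Finset.sum_pos' (fun j _ => sq_nonneg (w j)) ⟨i, Finset.mem_univ i, by positivity⟩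
  have hnorm : norm3 w ^ 2 = ∑ i, w i ^ 2 := Real.sq_sqrt hpos.le
  have hne : norm3 w ≠ 0 := by
    intro h; rw [h] at hnorm; linarith
  simp only [dot3, unitV, Pi.smul_apply, smul_eq_mul]
  rw [show ∑ i, a * ((norm3 w)⁻¹ * w i) * (b * ((norm3 w)⁻¹ * w i)) =
      a * b / norm3 w ^ 2 * ∑ i, w i ^ 2 by rw [Finset.mul_sum]; congr 1; ext i; field_simp,
    ← hnorm]
  field_simp

lemma vtx_sub_ne_zero {j k : Fin 4} (h : j ≠ k) : vtx k - vtx j ≠ 0 := by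
  fin_cases j <;> fin_cases k <;> simp_all [vtx, funext_iff, Fin.forall_fin_succ]

lemma dot3_faceInt {j₂ j₃ j₄ : Fin 4} (h₂₃ : j₂ ≠ j₃) (h₂₄ : j₂ ≠ j₄) (i : Fin 2)
    (m₁ n₁ m₂ n₂ : ℕ) (p : Fin 3 → ℝ) :
    dot3 (faceInt j₂ j₃ j₄ i m₁ n₁ p) (faceInt j₂ j₃ j₄ i m₂ n₂ p) =
      faceProfile m₁ n₁ (lam j₂ p) (lam j₃ p) (lam j₄ p) *
        faceProfile m₂ n₂ (lam j₂ p) (lam j₃ p) (lam j₄ p) := by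
  unfold faceInt
  split_ifs
  · exact dot3_smul_unitV _ _ (vtx_sub_ne_zero h₂₃)
  · exact dot3_smul_unitV _ _ (vtx_sub_ne_zero h₂₄)

/-- for each face `f_{j1} = [j2,j3,j4]` of the reference
tetrahedron and each fixed `i ∈ {1,2}`, the face-based interior functions are
orthonormal on `K³`. -/
theorem stmt16 : ∀ (j1 j2 j3 j4 : Fin 4), j2 ≠ j1 → j3 ≠ j1 → j4 ≠ j1 →
    j2 < j3 → j3 < j4 → ∀ i : Fin 2, ∀ m1 n1 m2 n2 : ℕ,
    ∫ p in K3, dot3 (faceInt j2 j3 j4 i m1 n1 p) (faceInt j2 j3 j4 i m2 n2 p) =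
      (if m1 = m2 then (1:ℝ) else 0) * (if n1 = n2 then (1:ℝ) else 0) := by
  intro j1 j2 j3 j4 _ _ _ h23 h34 i m1 n1 m2 n2
  have h24 : j2 ≠ j4 := (h23.trans h34).ne
  simp_rw [dot3_faceInt h23.ne h24 i]
  have hsymm := setIntegral_K3_comp_lam h23.ne h24 h34.ne
    fun q => faceProfile m1 n1 (q 0) (q 1) (q 2) * faceProfile m2 n2 (q 0) (q 1) (q 2)
  simp only [Matrix.cons_val_zero, Matrix.cons_val_one, Matrix.cons_val_two, Matrix.head_cons,
    Matrix.tail_cons] at hsymm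
  rw [hsymm, setIntegral_K3_faceProfile_mul]
end
end

section
/- On the reference tetrahedron K³, each face-based interior function Φ^{t,f_{j1}^i}_{m,n} (i ∈ {1,2}, m,n ≥ 0), defined by Φ^{t,f_{j1}^1}_{m,n} = ι (1−λ_{j2})^m (1−λ_{j2}−λ_{j3})^n P_m^{(2n+3,2)}(2λ_{j3}/(1−λ_{j2}) − 1) P_n^{(0,2)}(2λ_{j4}/(1−λ_{j2}−λ_{j3}) − 1) τ^{[j2,j3]}/|τ^{[j2,j3]}| and Φ^{t,f_{j1}^2}_{m,n} likewise with τ^{[j2,j4]}/|τ^{[j2,j4]}|, where ι = C_m^n λ_{j2} λ_{j3} λ_{j4}, satisfies: (i) its normal component vanishes at every point of each of the four faces of K³; (ii) its tangential trace vanishes on the other three faces, i.e. n^{f_{jk}} × Φ^{t,f_{j1}^i}_{m,n} = 0 at every point of f_{jk} for every jk ≠ j1; and (iii) it vanishes at every point of each of the six edges of K³. -/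
open MeasureTheory
open scoped BigOperators

noncomputable section

/-!
The vector field is a scalar multiple of `λ_{j2} λ_{j3} λ_{j4}` times a fixed unit vector
parallel to an edge of the face `f_{j1}`. The bubble factor kills it on the three faces
`f_{j2}, f_{j3}, f_{j4}`, hence on every edge, since each edge lies in two faces and at most
one of them is `f_{j1}`. On the remaining face `f_{j1}` the field is tangential, because the
edge vectors of `f_{j1}` are orthogonal to `∇λ_{j1}`.
-/

lemma dot3_eq_dotProduct : dot3 = dotProduct := rfl

lemma cross3_eq_crossProduct (u v : Fin 3 → ℝ) : cross3 u v = crossProduct u v :=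
  (cross_apply u v).symm

lemma lam_vtx (j a : Fin 4) : lam j (vtx a) = if j = a then 1 else 0 := by
  fin_cases j <;> fin_cases a <;> simp [lam, vtx]

lemma lam_add_smul (j : Fin 4) (x y : Fin 3 → ℝ) {u v : ℝ} (huv : u + v = 1) :
    lam j (u • x + v • y) = u * lam j x + v * lam j y := by
  obtain rfl : v = 1 - u := by linarith
  fin_cases j <;> simp [lam]; ring

lemma lam_eq_zero_of_mem_segment {j a b : Fin 4} (hja : j ≠ a) (hjb : j ≠ b)
    {p : Fin 3 → ℝ} (hp : p ∈ segment ℝ (vtx a) (vtx b)) : lam j p = 0 := by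
  obtain ⟨u, v, -, -, huv, rfl⟩ := hp
  simp [lam_add_smul j _ _ huv, lam_vtx, hja, hjb]

lemma gradLam_dotProduct_vtx_sub {j a b : Fin 4} (hja : j ≠ a) (hjb : j ≠ b) :
    gradLam j ⬝ᵥ (vtx b - vtx a) = 0 := by
  fin_cases j <;> fin_cases a <;> fin_cases b <;>
    simp_all [dotProduct, gradLam, vtx, Fin.sum_univ_three]

lemma nFace_dotProduct_unitV_vtx_sub {j a b : Fin 4} (hja : j ≠ a) (hjb : j ≠ b) :
    nFace j ⬝ᵥ unitV (vtx b - vtx a) = 0 := by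
  simp only [nFace, unitV, smul_dotProduct, dotProduct_smul, neg_dotProduct,
    gradLam_dotProduct_vtx_sub hja hjb, neg_zero, smul_zero]

section faceInt

variable {j2 j3 j4 : Fin 4} (i : Fin 2) (m n : ℕ)

lemma faceInt_eq_zero_of_lam_eq_zero {j : Fin 4} (hj : j = j2 ∨ j = j3 ∨ j = j4)
    {p : Fin 3 → ℝ} (hp : lam j p = 0) : faceInt j2 j3 j4 i m n p = 0 := by
  rcases hj with rfl | rfl | rfl <;> simp [faceInt, hp]

lemma nFace_dotProduct_faceInt {j1 : Fin 4} (h2 : j2 ≠ j1) (h3 : j3 ≠ j1) (h4 : j4 ≠ j1)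
    (p : Fin 3 → ℝ) : nFace j1 ⬝ᵥ faceInt j2 j3 j4 i m n p = 0 := by
  rw [faceInt, dotProduct_smul]
  split_ifs
  · rw [nFace_dotProduct_unitV_vtx_sub h2.symm h3.symm, smul_zero]
  · rw [nFace_dotProduct_unitV_vtx_sub h2.symm h4.symm, smul_zero]

end faceInt

lemma eq_or_eq_or_eq_of_ne {j1 j2 j3 j4 : Fin 4} (h2 : j2 ≠ j1) (h3 : j3 ≠ j1) (h4 : j4 ≠ j1)
    (h23 : j2 < j3) (h34 : j3 < j4) {j : Fin 4} (hj : j ≠ j1) :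
    j = j2 ∨ j = j3 ∨ j = j4 := by
  revert j1 j2 j3 j4 j; decide

lemma exists_ne_ne_of_lt {j2 j3 j4 : Fin 4} (h23 : j2 < j3) (h34 : j3 < j4) (a b : Fin 4) :
    ∃ j, (j = j2 ∨ j = j3 ∨ j = j4) ∧ j ≠ a ∧ j ≠ b := by
  revert j2 j3 j4 a b; decide

/-- each face-based interior function attached to the face
`f_{j1} = [j2,j3,j4]` (i) has vanishing normal component at every point of
each of the four faces of `K³`, (ii) has vanishing tangential trace
(`n^{f_{jk}} × Φ = 0`) at every point of every face `f_{jk}` with `jk ≠ j1`,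
and (iii) vanishes at every point of each of the six edges of `K³`. -/
theorem stmt17 : ∀ (j1 j2 j3 j4 : Fin 4), j2 ≠ j1 → j3 ≠ j1 → j4 ≠ j1 →
    j2 < j3 → j3 < j4 → ∀ i : Fin 2, ∀ m n : ℕ,
    (∀ j : Fin 4, ∀ p ∈ K3, lam j p = 0 →
      dot3 (nFace j) (faceInt j2 j3 j4 i m n p) = 0) ∧
    (∀ jk : Fin 4, jk ≠ j1 → ∀ p ∈ K3, lam jk p = 0 →
      cross3 (nFace jk) (faceInt j2 j3 j4 i m n p) = 0) ∧
    (∀ (a b : Fin 4), a < b → ∀ p ∈ segment ℝ (vtx a) (vtx b),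
      faceInt j2 j3 j4 i m n p = 0) := by
  intro j1 j2 j3 j4 h2 h3 h4 h23 h34 i m n
  refine ⟨fun j p _ hp => ?_, fun jk hk p _ hp => ?_, fun a b _ p hp => ?_⟩
  · rw [dot3_eq_dotProduct]
    by_cases hj : j = j1
    · subst hj
      exact nFace_dotProduct_faceInt i m n h2 h3 h4 p
    · rw [faceInt_eq_zero_of_lam_eq_zero i m n (eq_or_eq_or_eq_of_ne h2 h3 h4 h23 h34 hj) hp,
        dotProduct_zero]
  · rw [cross3_eq_crossProduct,
      faceInt_eq_zero_of_lam_eq_zero i m n (eq_or_eq_or_eq_of_ne h2 h3 h4 h23 h34 hk) hp,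
      map_zero]
  · obtain ⟨j, hj, hja, hjb⟩ := exists_ne_ne_of_lt h23 h34 a b
    exact faceInt_eq_zero_of_lam_eq_zero i m n hj (lam_eq_zero_of_mem_segment hja hjb hp)
end
end
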